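/- arXiv:1101.2630 — 5 statements merged into one kernel-verified Lean document; each statement's English description precedes it below -/
import Mathlib

section
/- If a ≤ b, then the complete bipartite graph K_{a,b} contains a strong immersion of the complete graph K_a. -/
open SimpleGraph

/-- A strong immersion of `H` into `G`: an injective vertex map `φ` together with
pairwise edge-disjoint paths joining the images of the endpoints of each edge of `H`,
each path internally disjoint from the image of `φ`. -/
def StrongImmersion {α β : Type*} (H : SimpleGraph α) (G : SimpleGraph β) : Prop :=
  ∃ φ : α → β, Function.Injective φ ∧
    ∃ P : ∀ ⦃u v : α⦄, H.Adj u v → G.Walk (φ u) (φ v),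
      (∀ ⦃u v⦄ (h : H.Adj u v), (P h).IsPath) ∧
      (∀ ⦃u v⦄ (h : H.Adj u v) ⦃u' v'⦄ (h' : H.Adj u' v'),
        s(u, v) ≠ s(u', v') → ∀ e ∈ (P h).edges, e ∉ (P h').edges) ∧
      (∀ ⦃u v⦄ (h : H.Adj u v) w, w ∈ (P h).support → w ∈ Set.range φ →
        w = φ u ∨ w = φ v)

lemma pair_eq_aux {α β : Type*} {x x' : α} {m m' : β} :
    s((Sum.inl x : α ⊕ β), Sum.inr m) = s((Sum.inl x' : α ⊕ β), Sum.inr m') ↔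
      x = x' ∧ m = m' := by
  rw [Sym2.eq, Sym2.rel_iff']
  simp

/-- If `a ≤ b`, then the complete bipartite graph `K_{a,b}` contains a strong immersion
of the complete graph `K_a`. -/
theorem stmt_0 (a b : ℕ) (hab : a ≤ b) :
    StrongImmersion (⊤ : SimpleGraph (Fin a)) (completeBipartiteGraph (Fin a) (Fin b)) := by
  classical
  set G := completeBipartiteGraph (Fin a) (Fin b)
  refine ⟨Sum.inl, fun x y h => by simpa using h, ?_⟩
  have adj1 : ∀ (u : Fin a) (m : Fin b), G.Adj (Sum.inl u) (Sum.inr m) := by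
    intro u m; simp [G]
  have adj2 : ∀ (m : Fin b) (v : Fin a), G.Adj (Sum.inr m) (Sum.inl v) := by
    intro m v; simp [G]
  refine ⟨fun u v _ =>
    Walk.cons (adj1 u (Fin.castLE hab (u + v)))
      (Walk.cons (adj2 (Fin.castLE hab (u + v)) v) Walk.nil), ?_, ?_, ?_⟩
  · intro u v h
    have huv : u ≠ v := h.ne
    simp [Walk.isPath_def, huv]
  · intro u v h u' v' h' hne e he he'
    haveI : NeZero a := ⟨u.pos.ne'⟩
    have huv : u ≠ v := h.ne
    have huv' : u' ≠ v' := h'.ne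
    simp only [Walk.edges_cons, Walk.edges_nil, List.mem_cons, List.not_mem_nil, or_false]
      at he he'
    -- normalize each membership to the form e = s(inl x, inr mid)
    have key : ∀ x x' : Fin a, (x = u ∨ x = v) → (x' = u' ∨ x' = v') →
        s((Sum.inl x : Fin a ⊕ Fin b), Sum.inr (Fin.castLE hab (u + v))) =
        s((Sum.inl x' : Fin a ⊕ Fin b), Sum.inr (Fin.castLE hab (u' + v'))) → False := by
      intro x x' hx hx' heq
      rw [pair_eq_aux] at heq
      obtain ⟨hxx, hm⟩ := heq
      have hsum : u + v = u' + v' := Fin.castLE_injective hab hm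
      apply hne
      rcases hx with h1 | h1 <;> rcases hx' with h2 | h2
      · have huu : u = u' := h1 ▸ h2 ▸ hxx
        rw [huu] at hsum
        rw [huu, add_left_cancel hsum]
      · have huu : u = v' := h1 ▸ h2 ▸ hxx
        rw [huu, add_comm v' v] at hsum
        rw [huu, ← add_right_cancel hsum, Sym2.eq_swap]
      · have hvv : v = u' := h1 ▸ h2 ▸ hxx
        rw [hvv, add_comm u u'] at hsum
        rw [hvv, add_left_cancel hsum, Sym2.eq_swap]
      · have hvv : v = v' := h1 ▸ h2 ▸ hxx
        rw [hvv, add_comm u v', add_comm u' v'] at hsum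
        rw [hvv, add_left_cancel hsum]
    rcases he with rfl | rfl
    · rcases he' with he' | he'
      · exact key u u' (Or.inl rfl) (Or.inl rfl) he'
      · exact key u v' (Or.inl rfl) (Or.inr rfl) (he'.trans Sym2.eq_swap)
    · rcases he' with he' | he'
      · exact key v u' (Or.inr rfl) (Or.inl rfl) (Sym2.eq_swap.trans he')
      · exact key v v' (Or.inr rfl) (Or.inr rfl) ((Sym2.eq_swap.trans he').trans Sym2.eq_swap)
  · intro u v h w hw hrange
    simp only [Walk.support_cons, Walk.support_nil, List.mem_cons, List.not_mem_nil,
      or_false] at hw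
    rcases hw with rfl | rfl | rfl
    · left; rfl
    · obtain ⟨x, hx⟩ := hrange; exact absurd hx (by simp)
    · right; rfl
end

section
/- Let G be a simple n-vertex graph with no subgraph isomorphic to K_q, and let u be a vertex of G with degree at most the average degree of G. Then there exists a simple graph G' on n−1 vertices, obtained from G by splitting off pairs of edges incident with u and deleting u (possibly first deleting some edges at u), such that the average degree of G' is at least d̄(G) − (q−2)/(n−1). -/
/-!
Split off a maximal family `M` of pairwise disjoint non-edges inside `N(u)`. By maximality the
neighbours of `u` left uncovered by `M` are pairwise adjacent, so together with `u` they form a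
clique and at most `q - 2` of them remain. Deleting `u` loses `d(u)` edges and splitting gains
`|M| ≥ (d(u) - (q - 2)) / 2` of them back; since `d(u) ≤ d̄(G)`, this costs at most
`(q - 2) / (n - 1)` of average degree.
-/

open SimpleGraph

noncomputable def avgDeg {W : Type*} [Fintype W] (G : SimpleGraph W) : ℝ :=
  2 * G.edgeSet.ncard / Fintype.card W

def Set.uncovered {V : Type*} (s : Set V) (M : Set (Sym2 V)) : Set V :=
  {x ∈ s | ∀ e ∈ M, x ∉ e}

theorem Set.ncard_le_ncard_uncovered_add_two_mul {V : Type*} [Finite V] (s : Set V)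
    (M : Set (Sym2 V)) : s.ncard ≤ (s.uncovered M).ncard + 2 * M.ncard := by
  have hcover : s ⊆ s.uncovered M ∪ ⋃ e ∈ M.toFinite.toFinset, {x | x ∈ e} := by
    intro x hx
    by_cases h : ∀ e ∈ M, x ∉ e
    · exact Or.inl ⟨hx, h⟩
    · push Not at h
      simpa using Or.inr h
  have hpair (e : Sym2 V) : {x | x ∈ e}.ncard ≤ 2 := by
    induction e using Sym2.ind with
    | _ a b =>
      have hab : {x | x ∈ s(a, b)} = {a, b} := by ext; simp
      rw [hab]; simpa using Set.ncard_insert_le a {b}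
  calc s.ncard
      ≤ (s.uncovered M).ncard + (⋃ e ∈ M.toFinite.toFinset, {x | x ∈ e}).ncard :=
        (Set.ncard_le_ncard hcover).trans (Set.ncard_union_le _ _)
    _ ≤ (s.uncovered M).ncard + M.toFinite.toFinset.card • 2 := by
        gcongr
        exact (Finset.set_ncard_biUnion_le _ _).trans
          (Finset.sum_le_card_nsmul _ _ _ fun e _ => hpair e)
    _ = (s.uncovered M).ncard + 2 * M.ncard := by
        rw [smul_eq_mul, mul_comm, Set.ncard_eq_toFinset_card M]

namespace SimpleGraph

variable {V : Type*}

theorem IsClique.ncard_lt_of_cliqueFree [Finite V] {G : SimpleGraph V} {s : Set V} {n : ℕ}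
    (hs : G.IsClique s) (hG : G.CliqueFree n) : s.ncard < n := by
  by_contra! h
  obtain ⟨t, hts, htn⟩ := Set.exists_subset_card_eq h
  exact hG t.toFinite.toFinset
    ⟨by simpa using hs.subset hts, by rw [← htn, Set.ncard_eq_toFinset_card]⟩

def IsNonEdgeMatchingOn (G : SimpleGraph V) (s : Set V) (M : Set (Sym2 V)) : Prop :=
  (∀ e ∈ M, ¬ e.IsDiag ∧ (∀ x ∈ e, x ∈ s) ∧ e ∉ G.edgeSet) ∧
    M.Pairwise fun e f => ∀ x, x ∈ e → x ∉ f

theorem IsNonEdgeMatchingOn.insert {G : SimpleGraph V} {s : Set V} {M : Set (Sym2 V)}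
    (hM : G.IsNonEdgeMatchingOn s M) {x y : V} (hx : x ∈ s.uncovered M)
    (hy : y ∈ s.uncovered M) (hxy : x ≠ y) (hadj : ¬ G.Adj x y) :
    G.IsNonEdgeMatchingOn s (insert s(x, y) M) := by
  obtain ⟨hxs, hxM⟩ := hx
  obtain ⟨hys, hyM⟩ := hy
  refine ⟨Set.forall_mem_insert.2 ⟨⟨by simpa using hxy, ?_, hadj⟩, hM.1⟩, hM.2.insert ?_⟩
  · intro z hz
    rcases Sym2.mem_iff.1 hz with rfl | rfl
    exacts [hxs, hys]
  · intro f hf _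
    constructor
    · intro z hz
      rcases Sym2.mem_iff.1 hz with rfl | rfl
      exacts [hxM f hf, hyM f hf]
    · intro z hzf hz
      rcases Sym2.mem_iff.1 hz with rfl | rfl
      exacts [hxM f hf hzf, hyM f hf hzf]

theorem exists_isNonEdgeMatchingOn_isClique_uncovered [Finite V] (G : SimpleGraph V)
    (s : Set V) :
    ∃ M, G.IsNonEdgeMatchingOn s M ∧ G.IsClique (s.uncovered M) := by
  obtain ⟨M, hM⟩ := (Set.toFinite {M | G.IsNonEdgeMatchingOn s M}).exists_maximal
    ⟨∅, by simp [IsNonEdgeMatchingOn]⟩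
  refine ⟨M, hM.prop, fun x hx y hy hxy => ?_⟩
  by_contra hadj
  exact hx.2 _ (hM.mem_of_prop_insert (hM.prop.insert hx hy hxy hadj)) (Sym2.mem_mk_left x y)

theorem ncard_edgeSet_comap_val_add_ncard_neighborSet [Finite V] (H : SimpleGraph V) (u : V) :
    (H.comap (Subtype.val : {v // v ≠ u} → V)).edgeSet.ncard + (H.neighborSet u).ncard =
      H.edgeSet.ncard := by
  classical
  let ι := Function.Embedding.subtype (· ≠ u)
  have hmap : (H.comap ι).map ι = H.deleteIncidenceSet u := by
    ext a b
    rw [map_adj, deleteIncidenceSet_adj]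
    simp [ι]
  have hedges : Sym2.map Subtype.val '' (H.comap ι).edgeSet = H.edgeSet \ H.incidenceSet u := by
    rw [← edgeSet_deleteIncidenceSet, ← hmap, edgeSet_map]
    rfl
  rw [← Set.ncard_image_of_injective _ (Sym2.map.injective Subtype.val_injective)]
  change (Sym2.map Subtype.val '' (H.comap ι).edgeSet).ncard + _ = _
  rw [hedges, ← Set.ncard_congr' (H.incidenceSetEquivNeighborSet u),
    Set.ncard_sdiff_add_ncard_of_subset (H.incidenceSet_subset u)]

/-- Each `s(x, y) ∈ M` is the edge created by splitting off the pair `ux, uy`; the remaining edges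
at `u` disappear with `u`. -/
def splitOff (G : SimpleGraph V) (u : V) (M : Set (Sym2 V)) : SimpleGraph {v // v ≠ u} :=
  (G ⊔ fromEdgeSet M).comap Subtype.val

theorem splitOff_adj {G : SimpleGraph V} {u : V} {M : Set (Sym2 V)}
    (hM : ∀ e ∈ M, ¬ e.IsDiag) (x y : {v // v ≠ u}) :
    (G.splitOff u M).Adj x y ↔ G.Adj x y ∨ s(x.val, y.val) ∈ M := by
  simp only [splitOff, comap_adj, sup_adj, fromEdgeSet_adj]
  exact or_congr_right ⟨And.left, fun h => ⟨h, fun hxy => hM _ h (by simp [hxy])⟩⟩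

theorem ncard_edgeSet_splitOff_add_ncard_neighborSet [Finite V] {G : SimpleGraph V} {u : V}
    {M : Set (Sym2 V)} (hM : ∀ e ∈ M, ¬ e.IsDiag ∧ (∀ x ∈ e, G.Adj u x) ∧ e ∉ G.edgeSet) :
    (G.splitOff u M).edgeSet.ncard + (G.neighborSet u).ncard = G.edgeSet.ncard + M.ncard := by
  have hedges : (G ⊔ fromEdgeSet M).edgeSet = G.edgeSet ∪ M := by
    have hoffDiag : Disjoint M Sym2.diagSet := Set.disjoint_left.2 fun e he => (hM e he).1
    rw [edgeSet_sup, edgeSet_fromEdgeSet, sdiff_eq_left.2 hoffDiag]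
  have hneighbors : (G ⊔ fromEdgeSet M).neighborSet u = G.neighborSet u := by
    ext x
    simp only [mem_neighborSet, sup_adj, fromEdgeSet_adj, or_iff_left_iff_imp, and_imp]
    exact fun h _ => (G.irrefl ((hM _ h).2.1 u (Sym2.mem_mk_left u x))).elim
  rw [splitOff, ← hneighbors, ncard_edgeSet_comap_val_add_ncard_neighborSet, hedges,
    Set.ncard_union_eq (Set.disjoint_right.2 fun e he => (hM e he).2.2)]

end SimpleGraph

theorem avgDeg_eq_zero_of_card_le_one {V : Type*} [Fintype V] (G : SimpleGraph V)
    (hV : Fintype.card V ≤ 1) : avgDeg G = 0 := by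
  have : Subsingleton V := Fintype.card_le_one_iff_subsingleton.1 hV
  have hbot : G = ⊥ := by
    ext a b
    simp [Subsingleton.elim a b]
  simp [avgDeg, hbot]

theorem avgDeg_nonneg {V : Type*} [Fintype V] (G : SimpleGraph V) : 0 ≤ avgDeg G := by
  unfold avgDeg
  positivity

theorem avgDeg_sub_le_avgDeg_of_ncard_edgeSet {V W : Type*} [Fintype V] [Fintype W]
    {G : SimpleGraph V} {G' : SimpleGraph W} (hW : Fintype.card W + 1 = Fintype.card V)
    {d k m : ℕ} (hd : (d : ℝ) ≤ avgDeg G) (hdk : d ≤ k + 2 * m)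
    (hedges : G'.edgeSet.ncard + d = G.edgeSet.ncard + m) :
    avgDeg G - k / (Fintype.card V - 1) ≤ avgDeg G' := by
  have hW' : (Fintype.card W : ℝ) = Fintype.card V - 1 := by
    rw [← hW]; push_cast; ring
  obtain hW0 | hWpos := Nat.eq_zero_or_pos (Fintype.card W)
  · -- one vertex: `G` has no edges and `k / 0 = 0`
    rw [avgDeg_eq_zero_of_card_le_one G (by omega), ← hW', hW0]
    simpa using avgDeg_nonneg G'
  have hVpos : (0 : ℝ) < Fintype.card V := by exact_mod_cast (by omega : 0 < Fintype.card V)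
  have hWpos' : (0 : ℝ) < Fintype.card W := by exact_mod_cast hWpos
  have hG : avgDeg G * Fintype.card V = 2 * G.edgeSet.ncard := by
    rw [avgDeg, div_mul_cancel₀ _ hVpos.ne']
  have hedges' : (G'.edgeSet.ncard : ℝ) + d = G.edgeSet.ncard + m := by exact_mod_cast hedges
  have hdk' : (d : ℝ) ≤ k + 2 * m := by exact_mod_cast hdk
  have hG' : avgDeg G' = 2 * G'.edgeSet.ncard / Fintype.card W := rfl
  rw [hG', ← hW', sub_le_iff_le_add, ← add_div, le_div_iff₀ hWpos', hW']
  linarith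

/-- Let `G` be a simple `n`-vertex graph with no subgraph isomorphic to `K_q`, and let `u`
be a vertex of degree at most the average degree of `G`.  Then there is a simple graph `G'`
on the remaining `n - 1` vertices, obtained from `G` by splitting off pairs of edges
incident with `u` (adding a matching `M` of non-edges inside the neighbourhood of `u`),
deleting the remaining edges at `u` and deleting `u`, whose average degree is at least
`avgDeg G - (q-2)/(n-1)`. -/
theorem stmt_2 {V : Type*} [Fintype V] [DecidableEq V] (G : SimpleGraph V) (q : ℕ)
    (hq : G.CliqueFree q) (u : V)
    (hu : ((G.neighborSet u).ncard : ℝ) ≤ avgDeg G) :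
    ∃ (M : Set (Sym2 V)) (G' : SimpleGraph {v : V // v ≠ u}),
      (∀ e ∈ M, ¬ e.IsDiag ∧ (∀ x ∈ e, G.Adj u x) ∧ e ∉ G.edgeSet) ∧
      (M.Pairwise fun e f => ∀ x, x ∈ e → x ∉ f) ∧
      (∀ x y : {v : V // v ≠ u}, G'.Adj x y ↔ (G.Adj x.val y.val ∨ s(x.val, y.val) ∈ M)) ∧
      avgDeg G - ((q : ℝ) - 2) / ((Fintype.card V : ℝ) - 1) ≤ avgDeg G' := by
  obtain ⟨M, hM, hclique⟩ := G.exists_isNonEdgeMatchingOn_isClique_uncovered (G.neighborSet u)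
  set S := (G.neighborSet u).uncovered M
  have hSq : S.ncard + 2 ≤ q := by
    have hlt := (hclique.insert fun _ hx _ => hx.1).ncard_lt_of_cliqueFree hq
    rw [Set.ncard_insert_of_notMem fun huS => G.irrefl huS.1] at hlt
    omega
  have hcard : Fintype.card {v // v ≠ u} + 1 = Fintype.card V := by
    rw [Fintype.card_subtype_compl, Fintype.card_subtype_eq]
    have := Fintype.card_pos_iff.2 ⟨u⟩
    omega
  refine ⟨M, G.splitOff u M, hM.1, hM.2, splitOff_adj fun e he => (hM.1 e he).1, ?_⟩
  calc avgDeg G - ((q : ℝ) - 2) / ((Fintype.card V : ℝ) - 1)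
      ≤ avgDeg G - S.ncard / ((Fintype.card V : ℝ) - 1) := by
        have hSq' : (S.ncard : ℝ) ≤ q - 2 := by
          rw [le_sub_iff_add_le]; exact_mod_cast hSq
        have hV : (1 : ℝ) ≤ Fintype.card V := mod_cast Fintype.card_pos_iff.2 ⟨u⟩
        gcongr
    _ ≤ avgDeg (G.splitOff u M) :=
        avgDeg_sub_le_avgDeg_of_ncard_edgeSet hcard hu
          (Set.ncard_le_ncard_uncovered_add_two_mul _ M)
          (ncard_edgeSet_splitOff_add_ncard_neighborSet hM.1)
end

section
/- For every graph G without a perfect matching, there exists a set X of vertices such that every odd-order component of G − X is hypomatchable and the number of odd-order components of G − X exceeds |X|. -/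
/-!
Choose `X` maximizing the deficiency `odd(G - X) - |X|` and, among such sets, one of maximal
size. By Tutte's theorem some set has positive deficiency, hence so does `X`. Suppose an odd
component `A` of `G - X` had a vertex `v` with `A - v` not perfectly matchable. Tutte's theorem
in `G[A - v]` gives `T` with `odd(A - v - T) > |T|`, and as `|A - v|` is even, parity upgrades
this to `odd(A - v - T) ≥ |T| + 2`. Removing `X ∪ {v} ∪ T` loses the odd component `A` but gains
these, so this larger set has deficiency at least that of `X`, a contradiction.
-/

open SimpleGraph

def Hypomatchable {α : Type*} (H : SimpleGraph α) : Prop :=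
  ∀ v : α, ∃ M : (H.induce {w | w ≠ v}).Subgraph, M.IsPerfectMatching

namespace SimpleGraph

variable {V W : Type*} {G : SimpleGraph V} {H : SimpleGraph W}

noncomputable def induceInduceIso (G : SimpleGraph V) (s : Set V) (t : Set s) :
    (G.induce s).induce t ≃g G.induce (Subtype.val '' t) where
  toEquiv := Equiv.Set.image Subtype.val t Subtype.val_injective
  map_rel_iff' := Iff.rfl

namespace Iso

lemma exists_isPerfectMatching (φ : G ≃g H) (h : ∃ M : G.Subgraph, M.IsPerfectMatching) :
    ∃ M : H.Subgraph, M.IsPerfectMatching := by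
  obtain ⟨M, hM, hMspan⟩ := h
  exact ⟨M.map φ.toHom, hM.map φ.toHom φ.injective, fun w ↦ ⟨φ.symm w, hMspan _, by simp⟩⟩

lemma hypomatchable (φ : G ≃g H) (h : Hypomatchable G) : Hypomatchable H := by
  intro w
  have hbij : Set.BijOn φ {v | v ≠ φ.symm w} {v | v ≠ w} := by
    refine ⟨fun v hv hvw ↦ hv ?_, φ.injective.injOn, fun u hu ↦ ⟨φ.symm u, ?_, by simp⟩⟩
    · simp [← hvw]
    · simpa [φ.symm.injective.eq_iff] using hu
  exact (φ.induce hbij).exists_isPerfectMatching (h (φ.symm w))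

lemma ncard_oddComponents (φ : G ≃g H) : G.oddComponents.ncard = H.oddComponents.ncard := by
  have hsupp (c : G.ConnectedComponent) :
      (φ.connectedComponentEquiv c).supp.ncard = c.supp.ncard := by
    simp only [← Nat.card_coe_set_eq]
    exact (Nat.card_congr (ConnectedComponent.isoEquivSupp φ c)).symm
  rw [← Set.ncard_image_of_injective _ φ.connectedComponentEquiv.injective]
  congr 1
  ext d
  obtain ⟨c, rfl⟩ := φ.connectedComponentEquiv.surjective d
  rw [φ.connectedComponentEquiv.injective.mem_set_image]
  simp only [Set.mem_ofPred_eq, hsupp]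

end Iso

lemma isTutteViolator_iff {u : Set V} :
    G.IsTutteViolator u ↔ u.ncard < (G.induce uᶜ).oddComponents.ncard := by
  let φ : ((⊤ : G.Subgraph).deleteVerts u).coe ≃g G.induce uᶜ :=
    { toEquiv := Equiv.subtypeEquivRight fun v ↦ by simp
      map_rel_iff' := by simp +contextual }
  rw [IsTutteViolator, φ.ncard_oddComponents]

lemma hypomatchable_induce_of_forall {A : Set V}
    (h : ∀ v ∈ A, ∃ M : (G.induce (A \ {v})).Subgraph, M.IsPerfectMatching) :
    Hypomatchable (G.induce A) := by
  intro v
  have hverts : Subtype.val '' {w : A | w ≠ v} = A \ {v.1} := by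
    ext x
    simp [Subtype.ext_iff, and_comm]
  refine (induceInduceIso G A _).symm.exists_isPerfectMatching ?_
  rw [hverts]
  exact h v v.2

/-- The vertex sets of the connected components of `G.induce s`, taken inside `V` so that
components of different induced subgraphs can be compared. -/
def IsComponentIn (G : SimpleGraph V) (s B : Set V) : Prop :=
  Maximal (fun C ↦ C ⊆ s ∧ (G.induce C).Connected) B

lemma isComponentIn_image_val_iff {s : Set V} {S : Set s} :
    IsComponentIn G s (Subtype.val '' S) ↔
      Maximal (fun T ↦ ((G.induce s).induce T).Connected) S := by
  have hconn (T : Set s) := (induceInduceIso G s T).connected_iff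
  simp only [IsComponentIn, Maximal, hconn]
  constructor
  · rintro ⟨⟨-, hS⟩, hmax⟩
    refine ⟨hS, fun T hT hST ↦ ?_⟩
    exact (Set.image_subset_image_iff Subtype.val_injective).mp
      (hmax ⟨Subtype.coe_image_subset _ _, hT⟩ (Set.image_mono hST))
  · rintro ⟨hS, hmax⟩
    refine ⟨⟨Subtype.coe_image_subset _ _, hS⟩, fun C ⟨hCs, hC⟩ hSC ↦ ?_⟩
    obtain ⟨T, rfl⟩ : ∃ T : Set s, Subtype.val '' T = C :=
      ⟨_, Set.image_preimage_eq_of_subset (by rwa [Subtype.range_coe])⟩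
    exact Set.image_mono (hmax hC ((Set.image_subset_image_iff Subtype.val_injective).mp hSC))

lemma isComponentIn_iff {s B : Set V} :
    IsComponentIn G s B ↔ ∃ c : (G.induce s).ConnectedComponent, Subtype.val '' c.supp = B := by
  constructor
  · intro h
    obtain ⟨T, rfl⟩ : ∃ T : Set s, Subtype.val '' T = B :=
      ⟨_, Set.image_preimage_eq_of_subset (by rw [Subtype.range_coe]; exact h.prop.1)⟩
    rw [isComponentIn_image_val_iff, ConnectedComponent.maximal_connected_induce_iff] at h
    obtain ⟨c, rfl⟩ := h
    exact ⟨c, rfl⟩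
  · rintro ⟨c, rfl⟩
    rw [isComponentIn_image_val_iff, ConnectedComponent.maximal_connected_induce_iff]
    exact ⟨c, rfl⟩

lemma ncard_oddComponents_induce (G : SimpleGraph V) (s : Set V) :
    (G.induce s).oddComponents.ncard = {B | IsComponentIn G s B ∧ Odd B.ncard}.ncard := by
  have hinj : Function.Injective fun c : (G.induce s).ConnectedComponent ↦ Subtype.val '' c.supp :=
    (Set.image_injective.mpr Subtype.val_injective).comp ConnectedComponent.supp_injective
  rw [← Set.ncard_image_of_injective _ hinj]
  congr 1
  ext B
  simp only [Set.mem_image, Set.mem_ofPred_eq, isComponentIn_iff]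
  constructor
  · rintro ⟨c, hodd, rfl⟩
    exact ⟨⟨c, rfl⟩, by rwa [Set.ncard_image_of_injective _ Subtype.val_injective]⟩
  · rintro ⟨⟨c, rfl⟩, hodd⟩
    exact ⟨c, by rwa [Set.ncard_image_of_injective _ Subtype.val_injective] at hodd, rfl⟩

namespace IsComponentIn

variable {s t A B Y : Set V}

lemma eq_of_not_disjoint (hA : IsComponentIn G s A) (hB : IsComponentIn G s B)
    (h : ¬ Disjoint A B) : A = B := by
  have hAB : (G.induce (A ∪ B)).Connected := induce_union_connected hA.prop.2.preconnected
    hB.prop.2.preconnected (Set.not_disjoint_iff_nonempty_inter.mp h)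
  have hABs : A ∪ B ⊆ s := Set.union_subset hA.prop.1 hB.prop.1
  exact (hA.eq_of_ge ⟨hABs, hAB⟩ Set.subset_union_left).symm.trans
    (hB.eq_of_ge ⟨hABs, hAB⟩ Set.subset_union_right)

lemma of_subset (hB : IsComponentIn G s B) (hBt : B ⊆ t) (hts : t ⊆ s) :
    IsComponentIn G t B :=
  hB.mono (fun _ hC ↦ ⟨hC.1.trans hts, hC.2⟩) ⟨hBt, hB.prop.2⟩

lemma of_diff (hA : IsComponentIn G s A) (hB : IsComponentIn G (A \ Y) B) :
    IsComponentIn G (s \ Y) B := by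
  have hBA : B ⊆ A := hB.prop.1.trans Set.sdiff_subset
  refine ⟨⟨hB.prop.1.trans (Set.sdiff_subset_sdiff_left hA.prop.1), hB.prop.2⟩,
    fun C ⟨hCs, hC⟩ hBC ↦ hB.2 ⟨fun x hx ↦ ⟨?_, (hCs hx).2⟩, hC⟩ hBC⟩
  have hAC : (G.induce (A ∪ C)).Connected := induce_union_connected hA.prop.2.preconnected
    hC.preconnected ((Set.nonempty_coe_sort.mp hB.prop.2.nonempty).mono (Set.subset_inter hBA hBC))
  rw [← hA.eq_of_ge ⟨Set.union_subset hA.prop.1 (hCs.trans Set.sdiff_subset), hAC⟩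
    Set.subset_union_left]
  exact Or.inr hx

end IsComponentIn

lemma ncard_oddComponents_add_le [Finite V] {s A Y : Set V} (hA : IsComponentIn G s A)
    (hYA : Y ⊆ A) :
    (G.induce s).oddComponents.ncard + (G.induce (A \ Y)).oddComponents.ncard ≤
      (G.induce (s \ Y)).oddComponents.ncard + 1 := by
  simp only [ncard_oddComponents_induce]
  set odd := fun t : Set V ↦ {B | IsComponentIn G t B ∧ Odd B.ncard}
  have hsub_left : odd s \ {A} ⊆ odd (s \ Y) := by
    rintro B ⟨⟨hB, hodd⟩, hBA : B ≠ A⟩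
    have hdisj : Disjoint B A := not_not.mp (mt (hB.eq_of_not_disjoint hA) hBA)
    exact ⟨hB.of_subset (Set.subset_sdiff.mpr ⟨hB.prop.1, hdisj.mono_right hYA⟩)
      Set.sdiff_subset, hodd⟩
  have hsub_right : odd (A \ Y) ⊆ odd (s \ Y) := fun B ⟨hB, hodd⟩ ↦ ⟨hA.of_diff hB, hodd⟩
  have hdisj : Disjoint (odd s \ {A}) (odd (A \ Y)) := by
    refine Set.disjoint_left.mpr fun B ⟨⟨hB, _⟩, hBA⟩ ⟨hB', _⟩ ↦ hBA ?_
    refine hB.eq_of_not_disjoint hA (Set.not_disjoint_iff.mpr ?_)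
    obtain ⟨x, hx⟩ := Set.nonempty_coe_sort.mp hB.prop.2.nonempty
    exact ⟨x, hx, (hB'.prop.1 hx).1⟩
  calc (odd s).ncard + (odd (A \ Y)).ncard
      ≤ (odd s \ {A}).ncard + 1 + (odd (A \ Y)).ncard := by
        gcongr
        exact (Set.ncard_le_ncard (Set.subset_insert_sdiff_singleton A _)).trans
          (Set.ncard_insert_le _ _)
    _ = (odd s \ {A} ∪ odd (A \ Y)).ncard + 1 := by rw [Set.ncard_union_eq hdisj]; ring
    _ ≤ (odd (s \ Y)).ncard + 1 :=
        Nat.add_le_add_right (Set.ncard_le_ncard (Set.union_subset hsub_left hsub_right)) 1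

lemma exists_add_two_le_ncard_oddComponents [Finite V] {t : Set V} (ht : Even t.ncard)
    (h : ¬ ∃ M : (G.induce t).Subgraph, M.IsPerfectMatching) :
    ∃ T ⊆ t, T.ncard + 2 ≤ (G.induce (t \ T)).oddComponents.ncard := by
  obtain ⟨u, hu⟩ : ∃ u, (G.induce t).IsTutteViolator u := by simpa [tutte] using h
  rw [isTutteViolator_iff, (induceInduceIso G t uᶜ).ncard_oddComponents,
    Set.image_val_compl] at hu
  refine ⟨Subtype.val '' u, Subtype.coe_image_subset _ _, ?_⟩
  rw [Set.ncard_image_of_injective _ Subtype.val_injective]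
  have hparity := (G.induce (t \ Subtype.val '' u)).odd_ncard_oddComponents
  rw [Nat.card_coe_set_eq, Set.ncard_sdiff (Subtype.coe_image_subset _ _),
    Set.ncard_image_of_injective _ Subtype.val_injective] at hparity
  have hle : u.ncard ≤ t.ncard := by
    simpa [Set.ncard_image_of_injective _ Subtype.val_injective] using
      Set.ncard_le_ncard (Subtype.coe_image_subset t u)
  rw [Nat.even_iff] at ht
  simp only [Nat.odd_iff] at hparity
  omega

noncomputable def deficiency (G : SimpleGraph V) (X : Set V) : ℤ :=
  (G.induce Xᶜ).oddComponents.ncard - X.ncard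

lemma hypomatchable_induce_of_forall_le [Finite V] {X A : Set V}
    (hX : ∀ X', toLex (G.deficiency X', X'.ncard) ≤ toLex (G.deficiency X, X.ncard))
    (hA : IsComponentIn G Xᶜ A) (hodd : Odd A.ncard) : Hypomatchable (G.induce A) := by
  refine hypomatchable_induce_of_forall fun v hv ↦ ?_
  by_contra hnm
  have heven : Even (A \ {v}).ncard := by
    have := Set.ncard_sdiff_singleton_add_one hv
    rw [Nat.even_iff]
    rw [Nat.odd_iff] at hodd
    omega
  obtain ⟨T, hTA, hT⟩ := exists_add_two_le_ncard_oddComponents heven hnm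
  have hvT : v ∉ T := fun hvT ↦ (hTA hvT).2 rfl
  have hYA : insert v T ⊆ A := Set.insert_subset hv (hTA.trans Set.sdiff_subset)
  have hcount := ncard_oddComponents_add_le hA hYA
  rw [Set.sdiff_sdiff, Set.singleton_union] at hT
  have hcompl : (X ∪ insert v T)ᶜ = Xᶜ \ insert v T := by rw [Set.compl_union, Set.sdiff_eq]
  rw [← hcompl] at hcount
  have hcard : (X ∪ insert v T).ncard = X.ncard + T.ncard + 1 := by
    rw [Set.ncard_union_eq (Set.subset_compl_iff_disjoint_left.mp (hYA.trans hA.prop.1)),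
      Set.ncard_insert_of_notMem hvT]
    ring
  have hle := Prod.Lex.toLex_le_toLex'.mp (hX (X ∪ insert v T))
  simp only [deficiency] at hle
  omega

end SimpleGraph

/-- (Edmonds–Gallai) For every graph `G` without a perfect matching there is a set `X` of
vertices such that every odd component of `G - X` is hypomatchable, and the number of odd
components of `G - X` exceeds `|X|`. -/
theorem stmt_6 {V : Type*} [Fintype V] (G : SimpleGraph V)
    (h : ¬ ∃ M : G.Subgraph, M.IsPerfectMatching) :
    ∃ X : Set V,
      (∀ c : (G.induce Xᶜ).ConnectedComponent, Odd c.supp.ncard →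
        Hypomatchable ((G.induce Xᶜ).induce c.supp)) ∧
      X.ncard < {c : (G.induce Xᶜ).ConnectedComponent | Odd c.supp.ncard}.ncard := by
  obtain ⟨X, hX⟩ := Finite.exists_max fun X : Set V ↦ toLex (G.deficiency X, X.ncard)
  refine ⟨X, fun c hc ↦ ?_, ?_⟩
  · have hA : IsComponentIn G Xᶜ (Subtype.val '' c.supp) := isComponentIn_iff.mpr ⟨c, rfl⟩
    have hodd : Odd (Subtype.val '' c.supp).ncard := by
      rwa [Set.ncard_image_of_injective _ Subtype.val_injective]
    exact (induceInduceIso G Xᶜ c.supp).symm.hypomatchable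
      (hypomatchable_induce_of_forall_le hX hA hodd)
  · change X.ncard < (G.induce Xᶜ).oddComponents.ncard
    obtain ⟨u, hu⟩ : ∃ u, G.IsTutteViolator u := by simpa [tutte] using h
    have hle := (Prod.Lex.toLex_le_toLex'.mp (hX u)).1
    rw [isTutteViolator_iff] at hu
    simp only [deficiency] at hle
    omega
end

section
/- Let p be an odd prime and n = p² + p + 1. Then the complete graph K_n contains n(p+1)/2 pairwise edge-disjoint trees (each with at least one edge) such that every two of the trees share at least one vertex. Consequently, the line graph of K_n has a clique minor of order n(p+1)/2. -/
/-!
The projective plane over `ZMod p` has `n` points and `n` lines; each line has `p + 1` points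
and two distinct lines meet in exactly one point. As `p + 1` is even, the complete graph on
`ZMod (p + 1)` splits into the `(p + 1) / 2` zigzag Hamiltonian paths `k, k + 1, k - 1, k + 2, …`
(Walecki): the `k`-th one uses exactly the edges `{a, b}` with `a + b ∈ {2k, 2k + 1}`. Laying these
paths along every line gives `n (p + 1) / 2` trees. Two of them on the same line share all their
vertices but no edge; two on distinct lines share the common point of the lines, and cannot share
an edge, since that would be two common points.
-/

open SimpleGraph

namespace SimpleGraph

variable {V W : Type*} {G : SimpleGraph V}

lemma IsAcyclic.map (f : V ↪ W) (hG : G.IsAcyclic) : (G.map f).IsAcyclic := by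
  intro v c hc
  have hrange : ∀ x ∈ c.support, x ∈ Set.range f := by
    intro x hx
    obtain ⟨e, he, hxe⟩ := (Walk.mem_support_iff_exists_mem_edges_of_not_nil hc.not_nil).mp hx
    obtain ⟨y, rfl⟩ := Sym2.mem_iff_exists.mp hxe
    have hadj : (G.map f).Adj x y := c.edges_subset_edgeSet he
    exact Set.image_subset_range _ _ (support_map f G ▸ hadj.mem_support_left)
  have hc' : (c.induce _ hrange).IsCycle :=
    (Walk.isCycle_map_iff_of_injective (Embedding.induce (G := G.map f) _).injective).mp
      (by rwa [Walk.map_induce])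
  let φ := (Embedding.map f G).isoInduceRange.symm
  exact hG _ ((Walk.isCycle_map_iff_of_injective (f := φ.toHom) φ.injective).mpr hc')

lemma pathGraph_isAcyclic (m : ℕ) : (pathGraph m).IsAcyclic := by
  -- A walk from `a` to `a + 1` has to leave `Set.Iic a`, and only the edge `s(a, a + 1)` does.
  have key : ∀ a b : Fin m, a.val + 1 = b.val → ∀ q : (pathGraph m).Walk a b,
      s(a, b) ∈ q.edges := by
    intro a b hab q
    obtain ⟨d, hd, hdS, hdS'⟩ := q.exists_boundary_dart (Set.Iic a) (Set.mem_Iic.mpr le_rfl)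
      fun hb => absurd (Fin.le_def.mp hb) (by omega)
    have hadj := pathGraph_adj.mp d.adj
    rw [Set.mem_Iic, Fin.le_def] at hdS hdS'
    have hd_edge : d.edge = s(a, b) := by
      rw [Dart.edge, show d.fst = a from Fin.ext (by omega), show d.snd = b from Fin.ext (by omega)]
    exact hd_edge ▸ List.mem_map_of_mem hd
  rw [isAcyclic_iff_forall_adj_isBridge]
  intro v w hvw
  rw [isBridge_iff_forall_walk_mem_edges]
  intro q
  rcases pathGraph_adj.mp hvw with h | h
  · exact key v w h q
  · simpa [Sym2.eq_swap] using key w v h q.reverse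

lemma edgeSet_map_pathGraph_nonempty {m : ℕ} (hm : 2 ≤ m) (f : Fin m ↪ V) :
    ((pathGraph m).map f).edgeSet.Nonempty :=
  ⟨s(f ⟨0, by omega⟩, f ⟨1, by omega⟩),
    (mem_edgeSet _).mpr (map_adj_apply.mpr (pathGraph_adj.mpr (Or.inl rfl)))⟩

lemma Preconnected.support_map [Nontrivial V] (hG : G.Preconnected) (f : V ↪ W) :
    (G.map f).support = Set.range f := by
  rw [SimpleGraph.support_map, hG.support_eq_univ, Set.image_univ]

lemma Connected.induce_support_map [Nontrivial V] (hG : G.Connected) (f : V ↪ W) :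
    ((G.map f).induce (G.map f).support).Connected := by
  rw [hG.preconnected.support_map f]
  exact (Embedding.map f G).isoInduceRange.connected_iff.mp hG

lemma disjoint_edgeSet_map {H : SimpleGraph V} (f : V ↪ W) (h : Disjoint G.edgeSet H.edgeSet) :
    Disjoint (G.map f).edgeSet (H.map f).edgeSet := by
  rw [edgeSet_map, edgeSet_map]
  exact (Set.disjoint_image_iff f.sym2Map.injective).mpr h

lemma disjoint_edgeSet_map_of_subsingleton {V' : Type*} {G' : SimpleGraph V'} (f : V ↪ W)
    (g : V' ↪ W) (h : (Set.range f ∩ Set.range g).Subsingleton) :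
    Disjoint (G.map f).edgeSet (G'.map g).edgeSet := by
  rw [Set.disjoint_left]
  intro e he he'
  induction e using Sym2.ind with | _ x y
  have hxy : x ≠ y := ((mem_edgeSet _).mp he).ne
  rw [mem_edgeSet, map_adj] at he he'
  obtain ⟨a, b, -, rfl, rfl⟩ := he
  obtain ⟨a', b', -, ha, hb⟩ := he'
  exact hxy (h ⟨⟨a, rfl⟩, a', ha⟩ ⟨⟨b, rfl⟩, b', hb⟩)

end SimpleGraph

section Zigzag

def zigzagOffset (M i : ℕ) : ℕ := if Even i then M - 1 - i / 2 else i / 2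

/-- The `k`-th zigzag `k, k + 1, k - 1, k + 2, k - 2, …` through `ZMod M`, written with offsets
in `[0, M)` so that the arithmetic stays in `ℕ`. -/
def zigzag (M k : ℕ) (i : Fin M) : ZMod M := ((k + 1 + zigzagOffset M i : ℕ) : ZMod M)

variable {M : ℕ}

lemma zigzagOffset_lt {i : ℕ} (hi : i < M) : zigzagOffset M i < M := by
  unfold zigzagOffset
  split_ifs <;> omega

lemma zigzagOffset_injOn (hM : Even M) {i j : ℕ} (hi : i < M) (hj : j < M)
    (h : zigzagOffset M i = zigzagOffset M j) : i = j := by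
  obtain ⟨r, rfl⟩ := hM
  unfold zigzagOffset at h
  split_ifs at h <;> rw [Nat.even_iff] at * <;> omega

lemma zigzag_injective (hM : Even M) (k : ℕ) : Function.Injective (zigzag M k) := by
  intro i j h
  simp only [zigzag, Nat.cast_add, add_right_inj, ZMod.natCast_eq_natCast_iff'] at h
  rw [Nat.mod_eq_of_lt (zigzagOffset_lt i.2), Nat.mod_eq_of_lt (zigzagOffset_lt j.2)] at h
  exact Fin.ext (zigzagOffset_injOn hM i.2 j.2 h)

lemma zigzag_bijective (hM : Even M) [NeZero M] (k : ℕ) : Function.Bijective (zigzag M k) :=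
  (Fintype.bijective_iff_injective_and_card _).mpr ⟨zigzag_injective hM k, by simp⟩

lemma zigzagOffset_add_zigzagOffset_succ {a : ℕ} (ha : a + 1 < M) :
    ∃ r < 2, zigzagOffset M a + zigzagOffset M (a + 1) + 2 = M + r := by
  unfold zigzagOffset
  rcases Nat.even_or_odd a with h | h
  · rw [if_pos h, if_neg (Nat.not_even_iff_odd.mpr h.add_one)]
    rw [Nat.even_iff] at h
    exact ⟨1, by norm_num, by omega⟩
  · rw [if_neg (Nat.not_even_iff_odd.mpr h), if_pos h.add_one]
    rw [Nat.odd_iff] at h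
    exact ⟨0, by norm_num, by omega⟩

lemma zigzag_add_zigzag_of_adj (k : ℕ) {i j : Fin M} (h : (pathGraph M).Adj i j) :
    ∃ r < 2, zigzag M k i + zigzag M k j = ((2 * k + r : ℕ) : ZMod M) := by
  obtain ⟨r, hr, hsum⟩ : ∃ r < 2, zigzagOffset M i + zigzagOffset M j + 2 = M + r := by
    rcases pathGraph_adj.mp h with h | h
    · simpa only [← h] using zigzagOffset_add_zigzagOffset_succ (M := M) (h ▸ j.2)
    · simpa only [← h, add_comm (zigzagOffset M (j + 1))] using
        zigzagOffset_add_zigzagOffset_succ (M := M) (h ▸ i.2)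
  have hsum' : k + 1 + zigzagOffset M i + (k + 1 + zigzagOffset M j) = 2 * k + r + M := by
    omega
  refine ⟨r, hr, ?_⟩
  simp only [zigzag, ← Nat.cast_add, hsum', Nat.cast_add (2 * k + r), ZMod.natCast_self, add_zero]

lemma eq_of_zigzag_edge_eq {k k' : ℕ} (hk : 2 * k + 1 < M) (hk' : 2 * k' + 1 < M)
    {i j i' j' : Fin M} (h : (pathGraph M).Adj i j) (h' : (pathGraph M).Adj i' j')
    (he : s(zigzag M k i, zigzag M k j) = s(zigzag M k' i', zigzag M k' j')) : k = k' := by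
  obtain ⟨r, hr, hsum⟩ := zigzag_add_zigzag_of_adj k h
  obtain ⟨r', hr', hsum'⟩ := zigzag_add_zigzag_of_adj k' h'
  have hsums : zigzag M k i + zigzag M k j = zigzag M k' i' + zigzag M k' j' := by
    rcases Sym2.eq_iff.mp he with ⟨h1, h2⟩ | ⟨h1, h2⟩
    · rw [h1, h2]
    · rw [h1, h2, add_comm]
  rw [hsum, hsum', ZMod.natCast_eq_natCast_iff', Nat.mod_eq_of_lt (by omega),
    Nat.mod_eq_of_lt (by omega)] at hsums
  omega

lemma disjoint_edgeSet_map_zigzag {k k' : ℕ} (hk : 2 * k + 1 < M) (hk' : 2 * k' + 1 < M)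
    (hne : k ≠ k') :
    Disjoint ((pathGraph M).map (zigzag M k)).edgeSet
      ((pathGraph M).map (zigzag M k')).edgeSet := by
  rw [Set.disjoint_left]
  intro e he he'
  induction e using Sym2.ind with | _ x y
  obtain ⟨-, i, j, hij, rfl, rfl⟩ := he
  obtain ⟨-, i', j', hij', hi', hj'⟩ := he'
  exact hne (eq_of_zigzag_edge_eq hk hk' hij hij' (by rw [hi', hj']))

end Zigzag

theorem exists_edgeDisjoint_intersecting_trees {V ι : Type*} {M : ℕ} (hM : Even M)
    (hM2 : 2 ≤ M) (e : ι → (ZMod M ↪ V))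
    (hmeet : Pairwise fun i j => ∃ x, Set.range (e i) ∩ Set.range (e j) = {x}) :
    ∃ T : ι × Fin (M / 2) → SimpleGraph V,
      (∀ t, (T t).edgeSet.Nonempty) ∧
      (∀ t, (T t).IsAcyclic) ∧
      (∀ t, ((T t).induce (T t).support).Connected) ∧
      (Pairwise fun t t' => Disjoint (T t).edgeSet (T t').edgeSet) ∧
      (∀ t t', ((T t).support ∩ (T t').support).Nonempty) := by
  have : Nontrivial (Fin M) := Fin.nontrivial_iff_two_le.mpr hM2
  have : NeZero M := ⟨by omega⟩
  let f : ι × Fin (M / 2) → (Fin M ↪ V) := fun t =>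
    ⟨e t.1 ∘ zigzag M t.2, (e t.1).injective.comp (zigzag_injective hM _)⟩
  have hsupp : ∀ t, ((pathGraph M).map (f t)).support = Set.range (e t.1) := fun t => by
    rw [(pathGraph_preconnected M).support_map, Function.Embedding.coeFn_mk, Set.range_comp,
      (zigzag_bijective hM _).surjective.range_eq, Set.image_univ]
  refine ⟨fun t => (pathGraph M).map (f t), fun t => edgeSet_map_pathGraph_nonempty hM2 _,
    fun t => (pathGraph_isAcyclic M).map _,
    fun t => (Connected.mk (pathGraph_preconnected M)).induce_support_map _, ?_, ?_⟩
  · rintro ⟨i, k⟩ ⟨i', k'⟩ hne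
    by_cases hii : i = i'
    · subst hii
      have hkk : k.val ≠ k'.val := fun h => hne (by rw [Fin.ext h])
      simp only [f, Function.Embedding.coeFn_mk, ← map_map]
      exact disjoint_edgeSet_map _ (disjoint_edgeSet_map_zigzag (by omega) (by omega) hkk)
    · obtain ⟨x, hx⟩ := hmeet hii
      refine disjoint_edgeSet_map_of_subsingleton _ _ ?_
      refine Set.Subsingleton.anti (hx ▸ Set.subsingleton_singleton) (Set.inter_subset_inter ?_ ?_)
      all_goals exact Set.range_comp_subset_range (zigzag M _) _
  · rintro ⟨i, k⟩ ⟨i', k'⟩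
    rw [hsupp, hsupp]
    by_cases hii : i = i'
    · subst hii
      simp only [Set.inter_self, Set.range_nonempty]
    · obtain ⟨x, hx⟩ := hmeet hii
      exact hx ▸ Set.singleton_nonempty x

namespace Configuration.ProjectivePlane

theorem exists_line_embeddings (P L : Type*) [Membership P L] [ProjectivePlane P L] [Finite P]
    [Finite L] : ∃ e : L → (ZMod (order P L + 1) ↪ P),
      Pairwise fun l l' => ∃ x, Set.range (e l) ∩ Set.range (e l') = {x} := by
  have hline : ∀ l : L, Nonempty (ZMod (order P L + 1) ≃ {x : P // x ∈ l}) := fun l => by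
    rw [← Finite.card_eq, Nat.card_zmod, ← pointCount_eq P l, pointCount]
  let e : L → (ZMod (order P L + 1) ↪ P) := fun l =>
    (hline l).some.toEmbedding.trans (Function.Embedding.subtype _)
  have hrange : ∀ l, Set.range (e l) = {x | x ∈ l} := fun l => by
    rw [Function.Embedding.coe_trans, Set.range_comp]
    simp
  refine ⟨e, fun l l' hll' => ?_⟩
  obtain ⟨x, hx, huniq⟩ := HasPoints.existsUnique_point P L l l' hll'
  exact ⟨x, by rw [hrange, hrange]; exact Set.eq_singleton_iff_unique_mem.mpr ⟨hx, huniq⟩⟩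

open scoped LinearAlgebra.Projectivization in
theorem order_projectivization (K : Type*) [Field K] [Fintype K] [DecidableEq K] :
    order (ℙ K (Fin 3 → K)) (ℙ K (Fin 3 → K)) = Fintype.card K := by
  have := Fintype.ofFinite (ℙ K (Fin 3 → K))
  have h := Projectivization.card_of_finrank K (Fin 3 → K) (Module.finrank_fin_fun K)
  rw [Nat.card_eq_fintype_card, card_points _ (ℙ K (Fin 3 → K))] at h
  simp only [Nat.card_eq_fintype_card, Finset.sum_range_succ, Finset.range_one,
    Finset.sum_singleton, pow_zero, pow_one] at h
  nlinarith

end Configuration.ProjectivePlane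

open Configuration.ProjectivePlane in
open scoped LinearAlgebra.Projectivization in
/-- Let `p` be an odd prime and `n = p² + p + 1`.  Then the complete graph `K_n`
contains `n(p+1)/2` pairwise edge-disjoint trees (each with at least one edge) such that
every two of the trees share at least one vertex.  (Equivalently, the line graph of `K_n`
has a clique minor of order `n(p+1)/2`.) -/
theorem stmt_14 (p : ℕ) (hp : p.Prime) (hodd : Odd p) (n : ℕ) (hn : n = p ^ 2 + p + 1) :
    ∃ T : Fin (n * (p + 1) / 2) → SimpleGraph (Fin n),
      (∀ i, (T i).edgeSet.Nonempty) ∧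
      (∀ i, (T i).IsAcyclic) ∧
      (∀ i, ((T i).induce (T i).support).Connected) ∧
      (Pairwise fun i j => Disjoint (T i).edgeSet (T j).edgeSet) ∧
      (∀ i j, ((T i).support ∩ (T j).support).Nonempty) := by
  have : Fact p.Prime := ⟨hp⟩
  let P := ℙ (ZMod p) (Fin 3 → ZMod p)
  have := Fintype.ofFinite P
  have horder : order P P = p := by simpa using order_projectivization (ZMod p)
  have hcard : Fintype.card P = n := by rw [card_points _ P, horder, hn]
  let ePt : P ≃ Fin n := Fintype.equivFinOfCardEq hcard
  obtain ⟨e, he⟩ := horder ▸ exists_line_embeddings P P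
  have hmeet : Pairwise fun l l' => ∃ x, Set.range ((e l).trans ePt.toEmbedding) ∩
      Set.range ((e l').trans ePt.toEmbedding) = {x} := fun l l' hll' => by
    obtain ⟨x, hx⟩ := he hll'
    refine ⟨ePt x, ?_⟩
    simp only [Function.Embedding.coe_trans, Set.range_comp, Equiv.coe_toEmbedding]
    rw [← Set.image_inter ePt.injective, hx, Set.image_singleton]
  obtain ⟨T, hne, hacyc, hconn, hdisj, hsupp⟩ :=
    exists_edgeDisjoint_intersecting_trees hodd.add_one (by have := hp.two_le; omega) _ hmeet
  let eIdx : Fin (n * (p + 1) / 2) ≃ P × Fin ((p + 1) / 2) :=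
    Fintype.equivOfCardEq (by simp [Fintype.card_prod, hcard,
      Nat.mul_div_assoc _ (even_iff_two_dvd.mp hodd.add_one)])
  exact ⟨T ∘ eIdx, fun _ => hne _, fun _ => hacyc _, fun _ => hconn _,
    hdisj.comp_of_injective eIdx.injective, fun _ _ => hsupp _ _⟩
end

section
/- Let G be a graph on n vertices with maximum degree d. Then the line graph of G does not contain a clique minor of order larger than d·√n. Equivalently, if G_1, …, G_t are pairwise edge-disjoint connected subgraphs of G, each with at least one edge, such that every two of them share a vertex, then t ≤ d·√n. -/
open SimpleGraph

/-!
A vertex `v` lying in `k` of the subgraphs is incident to an edge of each of them, and these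
edges are distinct by edge-disjointness, so `k ≤ d`. Every ordered pair `(i, j)` of indices is
witnessed by a common vertex of `Gᵢ` and `Gⱼ`, hence `t² ≤ ∑ᵥ k(v)² ≤ n d²`.
-/

namespace SimpleGraph

theorem ncard_setOf_mem_support_le_ncard_neighborSet {V ι : Type*} [Finite V]
    {G : SimpleGraph V} {H : ι → SimpleGraph V} (hsub : ∀ i, H i ≤ G)
    (hdisj : Pairwise fun i j => Disjoint (H i).edgeSet (H j).edgeSet) (v : V) :
    {i | v ∈ (H i).support}.ncard ≤ (G.neighborSet v).ncard := by
  have hnbr : ∀ i, ∃ w, v ∈ (H i).support → (H i).Adj v w := fun i => by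
    by_cases hv : v ∈ (H i).support
    · obtain ⟨w, hw⟩ := hv
      exact ⟨w, fun _ => hw⟩
    · exact ⟨v, fun hv' => absurd hv' hv⟩
  choose w hw using hnbr
  refine Set.ncard_le_ncard_of_injOn w (fun i hi => hsub i (hw i hi)) ?_
  intro i hi j hj hij
  by_contra hij'
  have hi' : s(v, w i) ∈ (H i).edgeSet := hw i hi
  have hj' : s(v, w i) ∈ (H j).edgeSet := hij ▸ hw j hj
  exact Set.disjoint_left.mp (hdisj hij') hi' hj'

end SimpleGraph

theorem Fintype.card_sq_le_of_inter_nonempty {ι V : Type*} [Fintype ι] [Fintype V]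
    (S : ι → Set V) (d : ℕ) (hmeet : ∀ i j, (S i ∩ S j).Nonempty)
    (hdeg : ∀ v, {i | v ∈ S i}.ncard ≤ d) :
    Fintype.card ι ^ 2 ≤ Fintype.card V * d ^ 2 := by
  classical
  set M : V → Finset ι := fun v => Finset.univ.filter fun i => v ∈ S i
  have hM : ∀ v, (M v).card ≤ d := fun v => by
    rw [← Set.ncard_coe_finset]
    simpa [M] using hdeg v
  have hcover : (Finset.univ : Finset (ι × ι)) ⊆ Finset.univ.biUnion fun v => M v ×ˢ M v := by
    rintro ⟨i, j⟩ -
    obtain ⟨v, hvi, hvj⟩ := hmeet i j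
    simp only [Finset.mem_biUnion, Finset.mem_product]
    exact ⟨v, Finset.mem_univ v, by simpa [M] using hvi, by simpa [M] using hvj⟩
  calc Fintype.card ι ^ 2 = (Finset.univ : Finset (ι × ι)).card := by simp [sq]
    _ ≤ ∑ v, (M v ×ˢ M v).card := (Finset.card_le_card hcover).trans Finset.card_biUnion_le
    _ ≤ ∑ _v : V, d ^ 2 := Finset.sum_le_sum fun v _ => by
        rw [Finset.card_product, ← sq]
        exact Nat.pow_le_pow_left (hM v) 2
    _ = Fintype.card V * d ^ 2 := by simp

theorem stmt_15_general {V : Type*} [Fintype V] (G : SimpleGraph V) (n d : ℕ)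
    (hn : n = Fintype.card V) (hd : ∀ v, (G.neighborSet v).ncard ≤ d)
    (t : ℕ) (Gi : Fin t → SimpleGraph V)
    (hsub : ∀ i, Gi i ≤ G)
    (hdisj : Pairwise fun i j => Disjoint (Gi i).edgeSet (Gi j).edgeSet)
    (hmeet : ∀ i j, ((Gi i).support ∩ (Gi j).support).Nonempty) :
    (t : ℝ) ≤ (d : ℝ) * Real.sqrt n := by
  have hsq : t ^ 2 ≤ n * d ^ 2 := by
    simpa [hn] using Fintype.card_sq_le_of_inter_nonempty (fun i => (Gi i).support) d hmeet
      fun v => (ncard_setOf_mem_support_le_ncard_neighborSet hsub hdisj v).trans (hd v)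
  rw [← Real.sqrt_sq (Nat.cast_nonneg d), ← Real.sqrt_mul (by positivity)]
  exact Real.le_sqrt_of_sq_le (by exact_mod_cast hsq.trans_eq (mul_comm _ _))

/-- Let `G` be a graph on `n` vertices with maximum degree `d`.  If `G₁, …, G_t` are
pairwise edge-disjoint connected subgraphs of `G`, each with at least one edge, such
that every two of them share a vertex, then `t ≤ d·√n`.  (Equivalently, the line graph
of `G` has no clique minor of order larger than `d·√n`.) -/
theorem stmt_15 {V : Type*} [Fintype V] (G : SimpleGraph V) (n d : ℕ)
    (hn : n = Fintype.card V) (hd : ∀ v, (G.neighborSet v).ncard ≤ d)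
    (t : ℕ) (Gi : Fin t → SimpleGraph V)
    (hsub : ∀ i, Gi i ≤ G)
    (hne : ∀ i, (Gi i).edgeSet.Nonempty)
    (hconn : ∀ i, ((Gi i).induce (Gi i).support).Connected)
    (hdisj : Pairwise fun i j => Disjoint (Gi i).edgeSet (Gi j).edgeSet)
    (hmeet : ∀ i j, ((Gi i).support ∩ (Gi j).support).Nonempty) :
    (t : ℝ) ≤ (d : ℝ) * Real.sqrt n :=
  stmt_15_general G n d hn hd t Gi hsub hdisj hmeet
end
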